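/- arXiv:math/0701381 — 2 statements merged into one kernel-verified Lean document; each statement's English description precedes it below -/
import Mathlib

section
/- Let T be a thick tree with loops with sink s and toppling matrix Δ with rows Δ_i ∈ ℤ^{V₀} for i ∈ V₀. For any j ∈ V₀, the vector ∑_{i ⪰ j} Δ_i ∈ ℤ^{V₀} has j-th component equal to e_{j,p(j)}, has p(j)-th component equal to −e_{j,p(j)} when p(j) ≠ s, and has all other components equal to 0. -/
namespace SandpilePaper

variable {V : Type*} [Fintype V] [DecidableEq V]

/-- Configurations: assignments of numbers of grains to ordinary (non-sink) vertices. -/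
abbrev Conf (s : V) : Type _ := {i : V // i ≠ s} → ℕ

/-- The degree of a vertex: `deg i = ∑ j, e i j`. -/
def deg (e : V → V → ℕ) (i : V) : ℕ := ∑ j, e i j

/-- Toppling the (unstable) vertex `i`. -/
def toppleAt (e : V → V → ℕ) (s : V) (i : {i : V // i ≠ s}) (u : Conf s) : Conf s :=
  fun j => if j = i then u i - deg e i.1 + e i.1 i.1 else u j + e i.1 j.1

/-- One toppling step: some unstable vertex topples. -/
def Topple (e : V → V → ℕ) (s : V) (u v : Conf s) : Prop :=
  ∃ i : {i : V // i ≠ s}, deg e i.1 ≤ u i ∧ v = toppleAt e s i u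

/-- A configuration is stable if every ordinary vertex has fewer grains than its degree. -/
def Stable (e : V → V → ℕ) (s : V) (u : Conf s) : Prop :=
  ∀ j : {i : V // i ≠ s}, u j < deg e j.1

/-- The underlying simple graph: edges between distinct vertices with positive multiplicity. -/
def graph (e : V → V → ℕ) : SimpleGraph V := SimpleGraph.fromRel fun i j => 0 < e i j

/-- `σ` is a stabilization map: `σ u` is stable and reached from `u` by finitely many topplings. -/
def IsStabilization (e : V → V → ℕ) (s : V) (σ : Conf s → Conf s) : Prop :=
  ∀ u, Stable e s (σ u) ∧ Relation.ReflTransGen (Topple e s) u (σ u)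

/-- A stable configuration `u` is recurrent if every configuration can reach it. -/
def Recurrent (e : V → V → ℕ) (s : V) (σ : Conf s → Conf s) (u : Conf s) : Prop :=
  Stable e s u ∧ ∀ v : Conf s, ∃ w : Conf s, σ (v + w) = u

/-- Apply a sequence of topplings. -/
def applySeq (e : V → V → ℕ) (s : V) (u : Conf s) : List {i : V // i ≠ s} → Conf s
  | [] => u
  | i :: L => applySeq e s (toppleAt e s i u) L

/-- A toppling sequence is valid if each toppled vertex is unstable when toppled. -/
def ValidSeq (e : V → V → ℕ) (s : V) (u : Conf s) : List {i : V // i ≠ s} → Prop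
  | [] => True
  | i :: L => deg e i.1 ≤ u i ∧ ValidSeq e s (toppleAt e s i u) L

/-- `succeq e s i j` means `i ⪰ j`: `j` lies on the unique path from `i` to the sink `s`. -/
def succeq (e : V → V → ℕ) (s i j : V) : Prop :=
  (graph e).dist i s = (graph e).dist i j + (graph e).dist j s

noncomputable instance (e : V → V → ℕ) (s i j : V) : Decidable (succeq e s i j) := Nat.decEq _ _

/-- `p` assigns to each ordinary vertex its parent: its neighbor on the path to the sink. -/
def IsParent (e : V → V → ℕ) (s : V) (p : {i : V // i ≠ s} → V) : Prop :=
  ∀ j : {i : V // i ≠ s}, (graph e).Adj j.1 (p j) ∧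
    (graph e).dist (p j) s + 1 = (graph e).dist j.1 s

/-- The set `{i : i ⪰ j}`. -/
noncomputable def descendants (e : V → V → ℕ) (s : V) (j : {i : V // i ≠ s}) :
    Finset {i : V // i ≠ s} :=
  Finset.univ.filter fun i => succeq e s i.1 j.1

/-- The set `{i : i ≻ j}`. -/
noncomputable def strictDescendants (e : V → V → ℕ) (s : V) (j : {i : V // i ≠ s}) :
    Finset {i : V // i ≠ s} :=
  Finset.univ.filter fun i => i ≠ j ∧ succeq e s i.1 j.1

/-- `j` is a leaf: its parent is its only neighbor in the underlying tree. -/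
def IsLeaf (e : V → V → ℕ) (s : V) (p : {i : V // i ≠ s} → V) (j : {i : V // i ≠ s}) : Prop :=
  ∀ k : V, (graph e).Adj j.1 k → k = p j

/-- Rows of the toppling matrix `Δ`. -/
def deltaRow (e : V → V → ℕ) (s : V) (i j : {i : V // i ≠ s}) : ℤ :=
  if i = j then (deg e i.1 : ℤ) - (e i.1 i.1 : ℤ) else -(e i.1 j.1 : ℤ)

/-- The lattice `Λ` spanned by the rows of the toppling matrix. -/
def lattice (e : V → V → ℕ) (s : V) : AddSubgroup ({i : V // i ≠ s} → ℤ) :=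
  AddSubgroup.closure (Set.range (deltaRow e s))

/-- The map `φ(u)_j = ∑_{i ⪰ j} u_i (mod e_{j,p(j)})`. -/
noncomputable def phi (e : V → V → ℕ) (s : V) (p : {i : V // i ≠ s} → V) (u : Conf s)
    (j : {i : V // i ≠ s}) : ZMod (e j.1 (p j)) :=
  ∑ i ∈ descendants e s j, (u i : ZMod (e j.1 (p j)))

/-- The map `φ` on integer vectors. -/
noncomputable def phiZ (e : V → V → ℕ) (s : V) (p : {i : V // i ≠ s} → V) (u : {i : V // i ≠ s} → ℤ)
    (j : {i : V // i ≠ s}) : ZMod (e j.1 (p j)) :=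
  ∑ i ∈ descendants e s j, (u i : ZMod (e j.1 (p j)))

/-!
Summing the rows `Δ_i` over a set `D` of ordinary vertices leaves at `k` the total multiplicity
of the edges between `k` and the complement of `D`, counted positively if `k ∈ D` and negatively
otherwise. In a tree, the set `{i | i ⪰ j}` is the subtree below `j`, and the only edge leaving it
is the one joining `j` to its parent `p j`.
-/

section Tree

variable {W : Type*} {G : SimpleGraph W}

open SimpleGraph

theorem _root_.SimpleGraph.Connected.exists_adj_dist_add_one (hG : G.Connected) {x j : W}
    (hx : x ≠ j) : ∃ m, G.Adj x m ∧ G.dist m j + 1 = G.dist x j := by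
  obtain ⟨w, hw⟩ := hG.exists_walk_length_eq_dist x j
  cases w with
  | nil => exact absurd rfl hx
  | @cons _ m _ hxm w =>
    refine ⟨m, hxm, le_antisymm ?_ ?_⟩
    · rw [← hw, Walk.length_cons]
      exact Nat.add_le_add_right (dist_le w) 1
    · have := hG.dist_triangle (u := x) (v := m) (w := j)
      rw [dist_eq_one_iff_adj.mpr hxm] at this
      omega

theorem _root_.SimpleGraph.IsTree.eq_snd_of_adj_of_dist_add_one (hG : G.IsTree) {u a b : W}
    {q : G.Walk a u} (hq : q.IsPath) (hab : G.Adj a b) (hb : G.dist b u + 1 = G.dist a u) :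
    b = q.snd := by
  classical
  refine hG.isAcyclic.eq_snd_of_adj_start hq hab ?_
  -- otherwise `a` would lie on a shortest path from `u` to `b`, which is shorter than `dist u a`
  by_contra hbq
  obtain ⟨r, hr, hrl⟩ := (hG.connected u b).exists_path_of_dist
  have ha : a ∈ r.support :=
    hG.isAcyclic.mem_support_of_ne_mem_support_of_adj_of_isPath hr hq.reverse hab.symm
      (by simpa using hbq)
  have : G.dist u a ≤ G.dist u b :=
    hrl ▸ (dist_le (r.takeUntil a ha)).trans (r.length_takeUntil_le_length ha)
  rw [dist_comm (u := u), dist_comm (u := u)] at this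
  omega

theorem _root_.SimpleGraph.IsTree.eq_of_adj_of_dist_add_one (hG : G.IsTree) {u a b c : W}
    (hab : G.Adj a b) (hac : G.Adj a c) (hb : G.dist b u + 1 = G.dist a u)
    (hc : G.dist c u + 1 = G.dist a u) : b = c := by
  obtain ⟨q, hq, -⟩ := (hG.connected a u).exists_path_of_dist
  rw [hG.eq_snd_of_adj_of_dist_add_one hq hab hb, hG.eq_snd_of_adj_of_dist_add_one hq hac hc]

theorem _root_.SimpleGraph.IsTree.eq_and_dist_add_one_of_adj_of_dist_eq (hG : G.IsTree)
    {u j x y : W} (hx : G.dist x u = G.dist x j + G.dist j u)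
    (hy : G.dist y u ≠ G.dist y j + G.dist j u) (hxy : G.Adj x y) :
    x = j ∧ G.dist y u + 1 = G.dist x u := by
  have hconn := hG.connected
  have hyx : G.dist y x = 1 := dist_eq_one_iff_adj.mpr hxy.symm
  have hyj : G.dist y j ≤ G.dist y x + G.dist x j := hconn.dist_triangle
  have hyu : G.dist y u ≤ G.dist y j + G.dist j u := hconn.dist_triangle
  have hparent : G.dist y u + 1 = G.dist x u := by
    rcases hG.dist_eq_dist_add_one_of_adj u hxy with h | h
    · rwa [dist_comm (v := x), dist_comm (v := y), eq_comm] at h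
    · rw [dist_comm (v := x), dist_comm (v := y)] at h
      omega
  -- if `x ≠ j`, the first step from `x` towards `j` is a second parent of `x`, inside the subtree
  refine ⟨by_contra fun hxj => ?_, hparent⟩
  obtain ⟨m, hxm, hm⟩ := hconn.exists_adj_dist_add_one hxj
  have hmu : G.dist m u ≤ G.dist m j + G.dist j u := hconn.dist_triangle
  have hxu : G.dist x u ≤ G.dist x m + G.dist m u := hconn.dist_triangle
  rw [dist_eq_one_iff_adj.mpr hxm] at hxu
  have hmy : m = y := hG.eq_of_adj_of_dist_add_one hxm hxy (by omega) hparent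
  subst hmy
  omega

end Tree

open Finset

theorem deltaRow_apply (e : V → V → ℕ) (s : V) (i k : {i : V // i ≠ s}) :
    deltaRow e s i k = (if i = k then (deg e k : ℤ) else 0) - e i k := by
  unfold deltaRow
  split_ifs with h
  · subst h; ring
  · ring

theorem sum_deltaRow_filter_apply (e : V → V → ℕ) (s : V) (hsym : ∀ i j : V, e i j = e j i)
    (P : V → Prop) [DecidablePred P] (hs : ¬ P s) (k : {i : V // i ≠ s}) :
    (∑ i ∈ univ.filter (fun i : {i : V // i ≠ s} => P i.1), deltaRow e s i) k =
      if P k then ∑ l ∈ univ.filter (fun l => ¬ P l), (e k l : ℤ)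
      else -∑ l ∈ univ.filter P, (e l k : ℤ) := by
  have hsub : ∑ i ∈ univ.filter (fun i : {i : V // i ≠ s} => P i.1), (e i k : ℤ) =
      ∑ l ∈ univ.filter P, (e l k : ℤ) := by
    rw [← sum_subtype_of_mem (p := (· ≠ s)) _ fun l hl hls => hs (hls ▸ (mem_filter.mp hl).2)]
    congr 1
    ext
    simp
  simp only [Finset.sum_apply, deltaRow_apply, sum_sub_distrib, sum_ite_eq',
    mem_filter, mem_univ, true_and, hsub]
  split_ifs with hk
  · have hdeg : (deg e k : ℤ) =
        ∑ l ∈ univ.filter P, (e l k : ℤ) + ∑ l ∈ univ.filter (fun l => ¬ P l), (e k l : ℤ) := by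
      simp_rw [hsym _ k.1]
      push_cast [deg]
      exact (sum_filter_add_sum_filter_not _ _ _).symm
    omega
  · simp

section Subtree

variable {W : Type*} {e : W → W → ℕ} {s : W}

theorem graph_adj_of_ne_zero {a b : W} (hab : a ≠ b) (h : e a b ≠ 0) : (graph e).Adj a b :=
  SimpleGraph.fromRel_adj _ a b |>.mpr ⟨hab, Or.inl (Nat.pos_of_ne_zero h)⟩

theorem succeq_refl (e : W → W → ℕ) (s j : W) : succeq e s j j := by
  simp [succeq]

theorem not_succeq_parent {p : {i : W // i ≠ s} → W} (hp : IsParent e s p) (j : {i : W // i ≠ s}) :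
    ¬ succeq e s (p j) j := by
  have := (hp j).2
  unfold succeq
  omega

theorem not_succeq_sink (htree : (graph e).IsTree) (j : {i : W // i ≠ s}) : ¬ succeq e s s j := by
  have := htree.connected.pos_dist_of_ne j.2
  rw [succeq, SimpleGraph.dist_self, SimpleGraph.dist_comm]
  omega

theorem eq_zero_of_succeq_of_not_succeq (htree : (graph e).IsTree)
    {p : {i : W // i ≠ s} → W} (hp : IsParent e s p) {j : {i : W // i ≠ s}} {a b : W}
    (ha : succeq e s a j) (hb : ¬ succeq e s b j) (hab : a ≠ j ∨ b ≠ p j) : e a b = 0 := by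
  by_contra h
  have hadj := graph_adj_of_ne_zero (fun hab : a = b => hb (hab ▸ ha)) h
  obtain ⟨rfl, hparent⟩ := htree.eq_and_dist_add_one_of_adj_of_dist_eq ha hb hadj
  have := htree.eq_of_adj_of_dist_add_one hadj (hp j).1 hparent (hp j).2
  tauto

end Subtree

theorem stmt_11 (e : V → V → ℕ) (s : V) (hsym : ∀ i j : V, e i j = e j i)
    (htree : (graph e).IsTree)
    (p : {i : V // i ≠ s} → V) (hp : IsParent e s p)
    (j : {i : V // i ≠ s}) :
    (∑ i ∈ descendants e s j, deltaRow e s i) =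
      fun k => if k = j then (e j.1 (p j) : ℤ)
        else if (k : V) = p j then -(e j.1 (p j) : ℤ) else 0 := by
  funext k
  rw [descendants, sum_deltaRow_filter_apply e s hsym (succeq e s · j) (not_succeq_sink htree j)]
  have hj := succeq_refl e s j
  have hpj := not_succeq_parent hp j
  have hzero {a b : V} (ha : succeq e s a j) (hb : ¬ succeq e s b j) (hab : a ≠ j ∨ b ≠ p j) :
      (e a b : ℤ) = 0 := by
    exact_mod_cast eq_zero_of_succeq_of_not_succeq htree hp ha hb hab
  split_ifs with hk hkj hkp hkj hkp
  · subst hkj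
    exact sum_eq_single_of_mem (p k) (by simpa using hpj)
      fun l hl hlp => hzero hk (by simpa using hl) (Or.inr hlp)
  · exact absurd (hkp ▸ hk) hpj
  · exact sum_eq_zero fun l hl =>
      hzero hk (by simpa using hl) (Or.inl (Subtype.coe_ne_coe.mpr hkj))
  · exact absurd (hkj ▸ hj) hk
  · rw [← hkp, sum_eq_single_of_mem j.1 (by simpa using hj)
      fun l hl hlj => hzero (by simpa using hl) hk (Or.inl hlj)]
  · rw [sum_eq_zero fun l hl => hzero (by simpa using hl) hk (Or.inr hkp), neg_zero]

end SandpilePaper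
end

section
/- Let T be a thick tree with loops with sink s, let u be a stable configuration, and let β ∈ ℕ^{V₀} be given by β_j = e_{j,s}. In any toppling sequence stabilizing u + β, no vertex topples before its parent: if j ∈ V₀ has p(j) ≠ s and j topples at some step, then p(j) toppled at an earlier step. -/
namespace SimpleGraph

variable {W : Type*} {G : SimpleGraph W}

theorem IsTree.mem_support_of_adj_of_dist_lt [DecidableEq W] (hG : G.IsTree) {s v x : W}
    {p : G.Walk s v} (hp : p.IsPath) (hadj : G.Adj v x) (hd : G.dist s x < G.dist s v) :
    x ∈ p.support := by
  obtain ⟨q, hq, hlen⟩ := hG.connected.exists_path_of_dist s x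
  refine hG.isAcyclic.mem_support_of_ne_mem_support_of_adj_of_isPath hp hq hadj fun hv => ?_
  have := (dist_le (q.takeUntil v hv)).trans (q.length_takeUntil_le_length hv)
  omega

theorem IsTree.eq_of_adj_of_dist_lt (hG : G.IsTree) {s v x y : W} (hx : G.Adj v x)
    (hy : G.Adj v y) (hdx : G.dist s x < G.dist s v) (hdy : G.dist s y < G.dist s v) :
    x = y := by
  classical
  obtain ⟨p, hp⟩ := (hG.connected s v).exists_isPath
  rw [hG.isAcyclic.eq_penultimate_of_adj_end hp hx (hG.mem_support_of_adj_of_dist_lt hp hx hdx),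
    hG.isAcyclic.eq_penultimate_of_adj_end hp hy (hG.mem_support_of_adj_of_dist_lt hp hy hdy)]

end SimpleGraph

namespace SandpilePaper

variable {V : Type*}

section Parent

variable {e : V → V → ℕ} {s : V}

theorem graph_adj_of_pos {v w : V} (hne : v ≠ w) (h : 0 < e v w) : (graph e).Adj v w :=
  (SimpleGraph.fromRel_adj _ _ _).2 ⟨hne, Or.inl h⟩

variable {p : {i : V // i ≠ s} → V}

theorem IsParent.dist_lt (hp : IsParent e s p) (j : {i : V // i ≠ s}) :
    (graph e).dist s (p j) < (graph e).dist s j.1 := by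
  have := (hp j).2
  rw [SimpleGraph.dist_comm, SimpleGraph.dist_comm (u := s)]
  omega

theorem IsParent.eq_sink_of_pos (hconn : (graph e).Connected) (hp : IsParent e s p)
    {j : {i : V // i ≠ s}} (h : 0 < e j.1 s) : p j = s := by
  have hdist : (graph e).dist j.1 s = 1 :=
    SimpleGraph.dist_eq_one_iff_adj.2 (graph_adj_of_pos j.2 h)
  have := (hp j).2
  exact hconn.dist_eq_zero_iff.1 (by omega)

theorem IsParent.eq_or_eq_of_adj (htree : (graph e).IsTree) (hp : IsParent e s p)
    {i j : {i : V // i ≠ s}} (hadj : (graph e).Adj i.1 j.1) : i.1 = p j ∨ j.1 = p i := by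
  rcases htree.dist_eq_dist_add_one_of_adj s hadj with h | h
  · exact .inr (htree.eq_of_adj_of_dist_lt hadj (hp i).1 (by omega) (hp.dist_lt i))
  · exact .inl (htree.eq_of_adj_of_dist_lt hadj.symm (hp j).1 (by omega) (hp.dist_lt j))

end Parent

variable [Fintype V] [DecidableEq V]

section Toppling

variable {e : V → V → ℕ} {s : V}

theorem toppleAt_apply_le {i v : {i : V // i ≠ s}} {w : Conf s} (hi : deg e i.1 ≤ w i)
    (hiv : i = v ∨ e i.1 v.1 = 0) : toppleAt e s i w v ≤ w v := by
  unfold toppleAt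
  rcases hiv with rfl | h
  · have : e i.1 i.1 ≤ deg e i.1 := Finset.single_le_sum (fun _ _ => Nat.zero_le _)
      (Finset.mem_univ _)
    rw [if_pos rfl]
    omega
  · split_ifs with hvi
    · subst hvi
      omega
    · simp [h]

theorem applySeq_apply_le {v : {i : V // i ≠ s}} :
    ∀ {w : Conf s} {M : List {i : V // i ≠ s}}, ValidSeq e s w M →
      (∀ i ∈ M, i = v ∨ e i.1 v.1 = 0) → applySeq e s w M v ≤ w v
  | _, [], _, _ => le_rfl
  | _, _ :: _, ⟨hi, hM⟩, h =>
    (applySeq_apply_le hM fun j hj => h j (List.mem_cons_of_mem _ hj)).trans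
      (toppleAt_apply_le hi (h _ List.mem_cons_self))

theorem ValidSeq.take :
    ∀ {w : Conf s} {M : List {i : V // i ≠ s}} (n : ℕ), ValidSeq e s w M →
      ValidSeq e s w (M.take n)
  | _, [], _, _ => by rw [List.take_nil]; trivial
  | _, _ :: _, 0, _ => trivial
  | _, _ :: _, n + 1, ⟨hi, hM⟩ => ⟨hi, hM.take n⟩

theorem ValidSeq.deg_le_getElem :
    ∀ {w : Conf s} {M : List {i : V // i ≠ s}}, ValidSeq e s w M →
      ∀ (k : ℕ) (hk : k < M.length), deg e M[k].1 ≤ applySeq e s w (M.take k) M[k]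
  | _, _ :: _, ⟨hi, _⟩, 0, _ => hi
  | _, _ :: _, ⟨_, hM⟩, k + 1, hk => hM.deg_le_getElem k (Nat.lt_of_succ_lt_succ hk)

theorem ValidSeq.exists_mem_take_pos {w : Conf s} {M : List {i : V // i ≠ s}}
    (hM : ValidSeq e s w M) {k : ℕ} (hk : k < M.length) (hw : w M[k] < deg e M[k].1) :
    ∃ i ∈ M.take k, i ≠ M[k] ∧ 0 < e i.1 M[k].1 := by
  by_contra! h
  have hle := applySeq_apply_le (hM.take k) fun i hi =>
    (em (i = M[k])).imp_right fun hne => Nat.le_zero.1 (h i hi hne)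
  have := hM.deg_le_getElem k hk
  omega

theorem parent_mem_take_of_validSeq (htree : (graph e).IsTree) {p : {i : V // i ≠ s} → V}
    (hp : IsParent e s p) {w : Conf s} (hw : ∀ v, p v ≠ s → w v < deg e v.1)
    {L : List {i : V // i ≠ s}} (hL : ValidSeq e s w L) (k : ℕ) (hk : k < L.length)
    (hps : p L[k] ≠ s) : (⟨p L[k], hps⟩ : {i : V // i ≠ s}) ∈ L.take k := by
  induction k using Nat.strong_induction_on with
  | _ k ih =>
  obtain ⟨i, hi, hne, hpos⟩ := hL.exists_mem_take_pos hk (hw _ hps)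
  obtain ⟨m, hm, rfl⟩ := List.mem_take_iff_getElem.1 hi
  have hmk : m < k := lt_of_lt_of_le hm (min_le_left _ _)
  rcases hp.eq_or_eq_of_adj htree (graph_adj_of_pos (fun h => hne (Subtype.ext h)) hpos)
    with h | h
  · rwa [show (⟨p L[k], hps⟩ : {i : V // i ≠ s}) = L[m] from Subtype.ext h.symm]
  · have hpm := ih m hmk (by omega) (h ▸ L[k].2)
    obtain ⟨m', hm', hm'eq⟩ := List.mem_take_iff_getElem.1 hpm
    have hm'm : m' < m := lt_of_lt_of_le hm' (min_le_left _ _)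
    have hsame : L[m'] = L[k] := hm'eq.trans (Subtype.ext h.symm)
    have hpm' := ih m' (by omega) (by omega) (hsame ▸ hps)
    rw [show (⟨p L[k], hps⟩ : {i : V // i ≠ s}) = ⟨p L[m'], hsame ▸ hps⟩ from
      Subtype.ext (congrArg p hsame.symm)]
    exact List.take_subset_take_left L (by omega) hpm'

end Toppling

theorem stmt_13_general (e : V → V → ℕ) (s : V)
    (htree : (graph e).IsTree)
    (p : {i : V // i ≠ s} → V) (hp : IsParent e s p)
    (u : Conf s) (hu : Stable e s u)
    (L : List {i : V // i ≠ s})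
    (hL : ValidSeq e s (u + fun j => e j.1 s) L)
    (k : ℕ) (hk : k < L.length) (hps : p (L.get ⟨k, hk⟩) ≠ s) :
    (⟨p (L.get ⟨k, hk⟩), hps⟩ : {i : V // i ≠ s}) ∈ L.take k := by
  refine parent_mem_take_of_validSeq htree hp (fun v hv => ?_) hL k hk hps
  have hsink : e v.1 s = 0 :=
    Nat.eq_zero_of_not_pos fun h => hv (hp.eq_sink_of_pos htree.connected h)
  simpa [hsink] using hu v

theorem stmt_13 (e : V → V → ℕ) (s : V) (hsym : ∀ i j : V, e i j = e j i)
    (htree : (graph e).IsTree)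
    (p : {i : V // i ≠ s} → V) (hp : IsParent e s p)
    (u : Conf s) (hu : Stable e s u)
    (L : List {i : V // i ≠ s})
    (hL : ValidSeq e s (u + fun j => e j.1 s) L)
    (hstab : Stable e s (applySeq e s (u + fun j => e j.1 s) L))
    (k : ℕ) (hk : k < L.length) (hps : p (L.get ⟨k, hk⟩) ≠ s) :
    (⟨p (L.get ⟨k, hk⟩), hps⟩ : {i : V // i ≠ s}) ∈ L.take k :=
  stmt_13_general e s htree p hp u hu L hL k hk hps

end SandpilePaper
end
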